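/- arXiv:2101.02180 — 6 statements merged into one kernel-verified Lean document; each statement's English description precedes it below -/
import Mathlib

section
/- (Weak duality between (REG) and (DCREG).) Let G be a simple graph on n vertices with adjacency matrix A and let C > 0. For every strictly feasible matrix M for (REG) and every symmetric positive semidefinite matrix Q with Q_ii = C for all i, one has ℒ_{A,C}(M) ≤ Σ_{(i,j): i∼j} g₁(Q_ij) + Σ_{(i,j): i≠j, i≁j} g₂(Q_ij), where g₁(q) := q if q ≥ −1 and g₁(q) := −1 − log(−q) if q < −1, and g₂(q) := q − log q − 1 if q ≥ 1 and g₂(q) := 0 if q < 1, with both sums taken over ordered pairs. -/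
open Finset

/-- Bernoulli log-likelihood, summed over ordered pairs `i ≠ j`. -/
noncomputable def bernLL {n : ℕ} (A M : Matrix (Fin n) (Fin n) ℝ) : ℝ :=
  ∑ i, ∑ j, if i ≠ j then A i j * Real.log (M i j) + (1 - A i j) * Real.log (1 - M i j) else 0

/-- Regularized log-likelihood `ℒ_{A,C}` of (REG). -/
noncomputable def regLL {n : ℕ} (A : Matrix (Fin n) (Fin n) ℝ) (C : ℝ)
    (M : Matrix (Fin n) (Fin n) ℝ) : ℝ :=
  bernLL A M - C * M.trace

/-- Strict feasibility for (REG). -/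
def StrictFeasible {n : ℕ} (A M : Matrix (Fin n) (Fin n) ℝ) : Prop :=
  M.PosSemidef ∧ (∀ i j, i ≠ j → 0 ≤ M i j ∧ M i j ≤ 1) ∧
    (∀ i j, A i j = 1 → 0 < M i j) ∧ (∀ i j, i ≠ j → A i j = 0 → M i j < 1)

/-- Edge term of the dual objective (DCREG). -/
noncomputable def g₁ (q : ℝ) : ℝ := if -1 ≤ q then q else -1 - Real.log (-q)

/-- Non-edge term of the dual objective (DCREG). -/
noncomputable def g₂ (q : ℝ) : ℝ := if 1 ≤ q then q - Real.log q - 1 else 0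

/-!
Weak duality by Fenchel–Young. Since `Q` and `M` are positive semidefinite, so is their Hadamard
product (Schur), hence `∑ i j, Q i j * M i j ≥ 0`; as `Q i i = C`, this says
`-C * tr M ≤ ∑_{i ≠ j} Q i j * M i j`. It then suffices to bound each off-diagonal entry:
`g₁ q = sup_{0 < m ≤ 1} (log m + q m)` and `g₂ q = sup_{0 ≤ m < 1} (log (1 - m) + q m)`,
and both suprema are controlled by `log x ≤ x - 1`.
-/

namespace Matrix

theorem PosSemidef.sum_sum_nonneg {ι R : Type*} [Fintype ι] [CommRing R] [PartialOrder R]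
    [StarRing R] [TrivialStar R] {P : Matrix ι ι R} (hP : P.PosSemidef) :
    0 ≤ ∑ i, ∑ j, P i j := by
  simpa [dotProduct, mulVec, sum_comm (γ := ι)] using hP.dotProduct_mulVec_nonneg 1

theorem PosSemidef.sum_sum_mul_nonneg {ι : Type*} [Fintype ι] {P Q : Matrix ι ι ℝ}
    (hP : P.PosSemidef) (hQ : Q.PosSemidef) : 0 ≤ ∑ i, ∑ j, P i j * Q i j :=
  (hP.hadamard hQ).sum_sum_nonneg

theorem sum_sum_mul_eq_trace_add_offDiag {ι R : Type*} [Fintype ι] [DecidableEq ι]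
    [Semiring R] {Q M : Matrix ι ι R} {C : R} (hQdiag : ∀ i, Q i i = C) :
    ∑ i, ∑ j, Q i j * M i j = C * M.trace + ∑ i, ∑ j, if i ≠ j then Q i j * M i j else 0 := by
  simp only [trace, diag, mul_sum, ← sum_add_distrib]
  refine sum_congr rfl fun i _ => ?_
  rw [← add_sum_erase _ _ (mem_univ i), sum_ite, sum_const_zero, add_zero, hQdiag]
  congr 2
  ext j
  simp [ne_comm]

end Matrix

theorem log_add_mul_le_g₁ (q : ℝ) {m : ℝ} (hm0 : 0 < m) (hm1 : m ≤ 1) :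
    Real.log m + q * m ≤ g₁ q := by
  unfold g₁
  split_ifs with hq
  · nlinarith [Real.log_le_sub_one_of_pos hm0]
  · have hq : 0 < -q := by linarith
    have := Real.log_le_sub_one_of_pos (mul_pos hq hm0)
    rw [Real.log_mul hq.ne' hm0.ne'] at this
    linarith

theorem log_one_sub_add_mul_le_g₂ (q : ℝ) {m : ℝ} (hm0 : 0 ≤ m) (hm1 : m < 1) :
    Real.log (1 - m) + q * m ≤ g₂ q := by
  have h1m : 0 < 1 - m := by linarith
  unfold g₂
  split_ifs with hq
  · have hq : 0 < q := by linarith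
    have := Real.log_le_sub_one_of_pos (mul_pos hq h1m)
    rw [Real.log_mul hq.ne' h1m.ne'] at this
    nlinarith
  · nlinarith [Real.log_le_sub_one_of_pos h1m]

theorem bernoulli_log_add_mul_le (q : ℝ) {a m : ℝ} (ha : a = 0 ∨ a = 1)
    (hm0 : 0 ≤ m) (hm1 : m ≤ 1) (hpos : a = 1 → 0 < m) (hlt : a = 0 → m < 1) :
    a * Real.log m + (1 - a) * Real.log (1 - m) + q * m ≤
      (if a = 1 then g₁ q else 0) + (if a = 0 then g₂ q else 0) := by
  rcases ha with rfl | rfl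
  · simpa using log_one_sub_add_mul_le_g₂ q hm0 (hlt rfl)
  · simpa using log_add_mul_le_g₁ q (hpos rfl) hm1

theorem weak_duality_REG_DCREG_general (n : ℕ) (A : Matrix (Fin n) (Fin n) ℝ)
    (hdiag : ∀ i, A i i = 0)
    (h01 : ∀ i j, A i j = 0 ∨ A i j = 1)
    (C : ℝ)
    (M : Matrix (Fin n) (Fin n) ℝ) (hM : StrictFeasible A M)
    (Q : Matrix (Fin n) (Fin n) ℝ) (hQ : Q.PosSemidef)
    (hQdiag : ∀ i, Q i i = C) :
    regLL A C M ≤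
      (∑ i, ∑ j, if A i j = 1 then g₁ (Q i j) else 0) +
      (∑ i, ∑ j, if i ≠ j ∧ A i j = 0 then g₂ (Q i j) else 0) := by
  obtain ⟨hMpsd, hM01, hMpos, hMlt⟩ := hM
  have htrace : -(C * M.trace) ≤ ∑ i, ∑ j, if i ≠ j then Q i j * M i j else 0 := by
    have := hQ.sum_sum_mul_nonneg hMpsd
    rw [Matrix.sum_sum_mul_eq_trace_add_offDiag hQdiag] at this
    linarith
  calc regLL A C M
      ≤ ∑ i, ∑ j, if i ≠ j then A i j * Real.log (M i j) + (1 - A i j) * Real.log (1 - M i j)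
          + Q i j * M i j else 0 := by
        simp only [regLL, bernLL, ite_add_zero, sum_add_distrib] at htrace ⊢
        linarith
    _ ≤ _ := by
        simp only [← sum_add_distrib]
        refine sum_le_sum fun i _ => sum_le_sum fun j _ => ?_
        by_cases hij : i = j
        · simp [hij, hdiag]
        · simpa [hij] using bernoulli_log_add_mul_le (Q i j) (h01 i j) (hM01 i j hij).1
            (hM01 i j hij).2 (hMpos i j) (hMlt i j hij)

/-- Weak duality between (REG) and (DCREG). -/
theorem weak_duality_REG_DCREG (n : ℕ) (A : Matrix (Fin n) (Fin n) ℝ)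
    (hsym : A.IsSymm) (hdiag : ∀ i, A i i = 0)
    (h01 : ∀ i j, A i j = 0 ∨ A i j = 1)
    (C : ℝ) (hC : 0 < C)
    (M : Matrix (Fin n) (Fin n) ℝ) (hM : StrictFeasible A M)
    (Q : Matrix (Fin n) (Fin n) ℝ) (hQsym : Q.IsSymm) (hQ : Q.PosSemidef)
    (hQdiag : ∀ i, Q i i = C) :
    regLL A C M ≤
      (∑ i, ∑ j, if A i j = 1 then g₁ (Q i j) else 0) +
      (∑ i, ∑ j, if i ≠ j ∧ A i j = 0 then g₂ (Q i j) else 0) :=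
  weak_duality_REG_DCREG_general n A hdiag h01 C M hM Q hQ hQdiag
end

section
/- Let G be a simple graph on n vertices with adjacency matrix A, degrees d_i, and suppose symmetric matrices P, Q ∈ ℝ^{n×n} satisfy the primal–dual optimality conditions for (REG) with parameter C, where C ≥ 1 and C > max_i d_i. Then: (i) for every non-adjacent pair i ≠ j, Q_ij ≤ C/(C − √(d_i·d_j)); and (ii) for every vertex i, P_ii ≥ d_i/C − Σ_{j: j≠i, j≁i} √(d_i·d_j) / (C·(C − √(d_i·d_j))). -/
/-!
Complementary slackness on the diagonal gives `C·P_ii = -∑_{k ≠ i} P_ik Q_ik`, and the sign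
conditions bound every term by `A_ik`, so `C·P_ii ≤ d_i`. Positive semidefiniteness of the
`2 × 2` principal minors of `P` then gives `C·P_ij ≤ √(d_i d_j) < C`. Hence no edge can have
`P_ij = 1`, so every edge term equals `1`, and on a non-edge `Q_ij = 1/(1 - P_ij)` is at most
`C/(C - √(d_i d_j))`, which bounds the non-edge terms from below.
-/

open Finset

/-- Primal–dual optimality (KKT) conditions for (REG) with parameter `C`, for a graph with
adjacency matrix `A`. -/
def KKTConditions {n : ℕ} (A P Q : Matrix (Fin n) (Fin n) ℝ) (C : ℝ) : Prop :=
  P.PosSemidef ∧ Q.PosSemidef ∧ P * Q = 0 ∧ (∀ i, Q i i = C) ∧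
  (∀ i j, i ≠ j → 0 ≤ P i j ∧ P i j ≤ 1) ∧
  (∀ i j, A i j = 1 → (Q i j ≤ -1 ∧ P i j * Q i j = -1) ∨ (-1 ≤ Q i j ∧ P i j = 1)) ∧
  (∀ i j, i ≠ j → A i j = 0 → (Q i j ≤ 1 ∧ P i j = 0) ∨ (1 ≤ Q i j ∧ Q i j * (1 - P i j) = 1))

theorem Matrix.PosSemidef.apply_sq_le_mul {ι : Type*} [Fintype ι] {M : Matrix ι ι ℝ}
    (hM : M.PosSemidef) (i j : ι) : M i j ^ 2 ≤ M i i * M j j := by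
  classical
  have hdet := (hM.submatrix ![i, j]).det_nonneg
  have hji : M j i = M i j := by simpa using hM.isHermitian.apply i j
  simp only [Matrix.det_fin_two, Matrix.submatrix_apply, Matrix.cons_val_zero,
    Matrix.cons_val_one, hji] at hdet
  nlinarith

theorem Matrix.PosSemidef.apply_mul_le_sqrt {ι : Type*} [Fintype ι] {M : Matrix ι ι ℝ}
    (hM : M.PosSemidef) {i j : ι} {a b c : ℝ} (hc : 0 ≤ c) (ha : M i i * c ≤ a)
    (hb : M j j * c ≤ b) : M i j * c ≤ √(a * b) := by
  have hic : 0 ≤ M i i * c := mul_nonneg hM.diag_nonneg hc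
  have hjc : 0 ≤ M j j * c := mul_nonneg hM.diag_nonneg hc
  refine (le_abs_self _).trans (Real.abs_le_sqrt ?_)
  calc (M i j * c) ^ 2 = M i j ^ 2 * c ^ 2 := by ring
    _ ≤ M i i * M j j * c ^ 2 := by gcongr; exact hM.apply_sq_le_mul i j
    _ = (M i i * c) * (M j j * c) := by ring
    _ ≤ a * b := mul_le_mul ha hb hjc (hic.trans ha)

theorem Matrix.diag_mul_diag_eq_neg_sum_erase {ι α : Type*} [Fintype ι] [DecidableEq ι]
    [Ring α] {P Q : Matrix ι ι α} (i : ι) (hPQ : (P * Q) i i = 0) :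
    P i i * Q i i = -∑ k ∈ univ.erase i, P i k * Q k i := by
  rw [Matrix.mul_apply, ← add_sum_erase _ _ (mem_univ i)] at hPQ
  exact eq_neg_of_add_eq_zero_left hPQ

theorem sqrt_mul_lt_of_lt_of_lt {a b c : ℝ} (ha : 0 ≤ a) (hb : 0 ≤ b) (hac : a < c)
    (hbc : b < c) : √(a * b) < c := by
  rw [Real.sqrt_lt' (ha.trans_lt hac), sq]
  exact mul_lt_mul'' hac hbc ha hb

def EdgeCondition (p q : ℝ) : Prop :=
  (q ≤ -1 ∧ p * q = -1) ∨ (-1 ≤ q ∧ p = 1)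

def NonEdgeCondition (p q : ℝ) : Prop :=
  (q ≤ 1 ∧ p = 0) ∨ (1 ≤ q ∧ q * (1 - p) = 1)

section Slackness

variable {p q C s : ℝ}

theorem EdgeCondition.neg_mul_le_one (h : EdgeCondition p q) : -(p * q) ≤ 1 := by
  rcases h with ⟨-, hpq⟩ | ⟨hq, rfl⟩ <;> linarith

theorem EdgeCondition.mul_eq_neg_one (h : EdgeCondition p q) (hp : p < 1) : p * q = -1 := by
  rcases h with ⟨-, hpq⟩ | ⟨-, rfl⟩
  · exact hpq
  · exact absurd hp (lt_irrefl 1)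

theorem NonEdgeCondition.neg_mul_nonpos (h : NonEdgeCondition p q) : -(p * q) ≤ 0 := by
  rcases h with ⟨-, rfl⟩ | ⟨hq, hpq⟩
  · simp
  · linarith

theorem NonEdgeCondition.le_div_sub (h : NonEdgeCondition p q) (hs : 0 ≤ s) (hsC : s < C)
    (hp : p * C ≤ s) : q ≤ C / (C - s) := by
  have hCs : 0 < C - s := sub_pos.mpr hsC
  rw [le_div_iff₀ hCs]
  rcases h with ⟨hq, -⟩ | ⟨hq, hpq⟩
  · nlinarith
  · -- `q (C - s) ≤ q (1 - p) C = C`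
    nlinarith

theorem NonEdgeCondition.neg_div_sub_le (h : NonEdgeCondition p q) (hs : 0 ≤ s) (hsC : s < C)
    (hp : p * C ≤ s) : -(s / (C - s)) ≤ -(p * q) := by
  have hCs : 0 < C - s := sub_pos.mpr hsC
  have hq := h.le_div_sub hs hsC hp
  rcases h with ⟨-, rfl⟩ | ⟨-, hpq⟩
  · simpa using div_nonneg hs hCs.le
  · have hdiv : C / (C - s) = 1 + s / (C - s) := by field_simp; ring
    linarith

end Slackness

section Degree

variable {n : ℕ} {A : Matrix (Fin n) (Fin n) ℝ} {C : ℝ} {d : Fin n → ℝ}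

theorem degree_nonneg (h01 : ∀ i j, A i j = 0 ∨ A i j = 1) (hd : ∀ i, d i = ∑ j, A i j)
    (i : Fin n) : 0 ≤ d i := by
  rw [hd]
  exact sum_nonneg fun j _ => by rcases h01 i j with hA | hA <;> simp [hA]

theorem sqrt_degree_lt (h01 : ∀ i j, A i j = 0 ∨ A i j = 1) (hd : ∀ i, d i = ∑ j, A i j)
    (hCd : ∀ i, d i < C) (i j : Fin n) : √(d i * d j) < C :=
  sqrt_mul_lt_of_lt_of_lt (degree_nonneg h01 hd i) (degree_nonneg h01 hd j) (hCd i) (hCd j)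

end Degree

namespace KKTConditions

variable {n : ℕ} {A P Q : Matrix (Fin n) (Fin n) ℝ} {C : ℝ} {d : Fin n → ℝ}

theorem edgeCondition (h : KKTConditions A P Q C) {i j : Fin n} (hA : A i j = 1) :
    EdgeCondition (P i j) (Q i j) :=
  h.2.2.2.2.2.1 i j hA

theorem nonEdgeCondition (h : KKTConditions A P Q C) {i j : Fin n} (hij : i ≠ j)
    (hA : A i j = 0) : NonEdgeCondition (P i j) (Q i j) :=
  h.2.2.2.2.2.2 i j hij hA

theorem nonneg (h : KKTConditions A P Q C) (i : Fin n) : 0 ≤ C :=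
  h.2.2.2.1 i ▸ h.2.1.diag_nonneg

theorem diag_mul_eq_neg_sum (h : KKTConditions A P Q C) (i : Fin n) :
    P i i * C = -∑ k ∈ univ.erase i, P i k * Q i k := by
  have hslack := Matrix.diag_mul_diag_eq_neg_sum_erase i (congrFun (congrFun h.2.2.1 i) i)
  rw [h.2.2.2.1 i] at hslack
  rw [hslack]
  congr 1
  exact sum_congr rfl fun k _ => by rw [← h.2.1.isHermitian.apply i k, star_trivial]

theorem neg_mul_le_adjacency (h : KKTConditions A P Q C) (h01 : ∀ i j, A i j = 0 ∨ A i j = 1)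
    {i k : Fin n} (hik : i ≠ k) : -(P i k * Q i k) ≤ A i k := by
  rcases h01 i k with hA | hA
  · rw [hA]
    exact (h.nonEdgeCondition hik hA).neg_mul_nonpos
  · rw [hA]
    exact (h.edgeCondition hA).neg_mul_le_one

theorem diag_mul_le_degree (h : KKTConditions A P Q C) (hdiag : ∀ i, A i i = 0)
    (h01 : ∀ i j, A i j = 0 ∨ A i j = 1) (hd : ∀ i, d i = ∑ j, A i j) (i : Fin n) :
    P i i * C ≤ d i := by
  rw [h.diag_mul_eq_neg_sum, ← sum_neg_distrib, hd, ← sum_erase _ (hdiag i)]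
  exact sum_le_sum fun k hk => h.neg_mul_le_adjacency h01 (ne_of_mem_erase hk).symm

theorem mul_le_sqrt_degree (h : KKTConditions A P Q C) (hdiag : ∀ i, A i i = 0)
    (h01 : ∀ i j, A i j = 0 ∨ A i j = 1) (hd : ∀ i, d i = ∑ j, A i j) (i j : Fin n) :
    P i j * C ≤ √(d i * d j) :=
  h.1.apply_mul_le_sqrt (h.nonneg i) (h.diag_mul_le_degree hdiag h01 hd i)
    (h.diag_mul_le_degree hdiag h01 hd j)

theorem le_div_sub_sqrt_degree (h : KKTConditions A P Q C) (hdiag : ∀ i, A i i = 0)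
    (h01 : ∀ i j, A i j = 0 ∨ A i j = 1) (hd : ∀ i, d i = ∑ j, A i j) (hCd : ∀ i, d i < C)
    {i j : Fin n} (hij : i ≠ j) (hA : A i j = 0) : Q i j ≤ C / (C - √(d i * d j)) :=
  (h.nonEdgeCondition hij hA).le_div_sub (Real.sqrt_nonneg _) (sqrt_degree_lt h01 hd hCd i j)
    (h.mul_le_sqrt_degree hdiag h01 hd i j)

theorem mul_eq_neg_one_of_adj (h : KKTConditions A P Q C) (hdiag : ∀ i, A i i = 0)
    (h01 : ∀ i j, A i j = 0 ∨ A i j = 1) (hd : ∀ i, d i = ∑ j, A i j) (hCd : ∀ i, d i < C)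
    {i j : Fin n} (hA : A i j = 1) : P i j * Q i j = -1 := by
  have hC : 0 < C := (degree_nonneg h01 hd i).trans_lt (hCd i)
  have hPC : P i j * C < 1 * C :=
    (h.mul_le_sqrt_degree hdiag h01 hd i j).trans_lt
      (by simpa using sqrt_degree_lt h01 hd hCd i j)
  exact (h.edgeCondition hA).mul_eq_neg_one (lt_of_mul_lt_mul_right hPC hC.le)

theorem degree_sub_sum_le_diag_mul (h : KKTConditions A P Q C) (hdiag : ∀ i, A i i = 0)
    (h01 : ∀ i j, A i j = 0 ∨ A i j = 1) (hd : ∀ i, d i = ∑ j, A i j) (hCd : ∀ i, d i < C)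
    (i : Fin n) :
    d i - ∑ j ∈ univ.filter (fun j => j ≠ i ∧ A i j = 0),
        √(d i * d j) / (C - √(d i * d j)) ≤ P i i * C := by
  set g : Fin n → ℝ := fun k => √(d i * d k) / (C - √(d i * d k))
  have hterm : ∀ k ∈ univ.erase i,
      A i k - (if A i k = 0 then g k else 0) ≤ -(P i k * Q i k) := by
    intro k hk
    have hik : i ≠ k := (ne_of_mem_erase hk).symm
    rcases h01 i k with hA | hA
    · simpa [hA] using (h.nonEdgeCondition hik hA).neg_div_sub_le (Real.sqrt_nonneg _)
        (sqrt_degree_lt h01 hd hCd i k) (h.mul_le_sqrt_degree hdiag h01 hd i k)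
    · simp [hA, h.mul_eq_neg_one_of_adj hdiag h01 hd hCd hA]
  have hfilter : univ.filter (fun j => j ≠ i ∧ A i j = 0) = (univ.erase i).filter (A i · = 0) := by
    ext k
    simp [and_comm]
  have hsum := sum_le_sum hterm
  rw [sum_sub_distrib, sum_erase (f := A i) _ (hdiag i), ← hd, sum_neg_distrib,
    ← h.diag_mul_eq_neg_sum] at hsum
  rwa [hfilter, sum_filter]

end KKTConditions

theorem large_C_bounds_of_KKT_general (n : ℕ) (A P Q : Matrix (Fin n) (Fin n) ℝ)
    (hdiag : ∀ i, A i i = 0)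
    (h01 : ∀ i j, A i j = 0 ∨ A i j = 1)
    (d : Fin n → ℝ) (hd : ∀ i, d i = ∑ j, A i j)
    (C : ℝ) (hCd : ∀ i, d i < C)
    (hKKT : KKTConditions A P Q C) :
    (∀ i j, i ≠ j → A i j = 0 → Q i j ≤ C / (C - Real.sqrt (d i * d j))) ∧
    (∀ i, d i / C -
        ∑ j ∈ univ.filter (fun j => j ≠ i ∧ A i j = 0),
          Real.sqrt (d i * d j) / (C * (C - Real.sqrt (d i * d j))) ≤ P i i) := by
  refine ⟨fun i j hij hA => hKKT.le_div_sub_sqrt_degree hdiag h01 hd hCd hij hA, fun i => ?_⟩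
  have hC : 0 < C := (degree_nonneg h01 hd i).trans_lt (hCd i)
  simp only [div_mul_eq_div_div_swap _ C]
  rw [← sum_div, ← sub_div, div_le_iff₀ hC]
  exact hKKT.degree_sub_sum_le_diag_mul hdiag h01 hd hCd i

/-- Bounds in the regime `C > max_i d_i`: dual non-edge entries are at most
`C/(C - √(dᵢdⱼ))` and diagonal primal entries admit the stated lower bound. -/
theorem large_C_bounds_of_KKT (n : ℕ) (A P Q : Matrix (Fin n) (Fin n) ℝ)
    (hsym : A.IsSymm) (hdiag : ∀ i, A i i = 0)
    (h01 : ∀ i j, A i j = 0 ∨ A i j = 1)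
    (hPsym : P.IsSymm) (hQsym : Q.IsSymm)
    (d : Fin n → ℝ) (hd : ∀ i, d i = ∑ j, A i j)
    (C : ℝ) (hC : 1 ≤ C) (hCd : ∀ i, d i < C)
    (hKKT : KKTConditions A P Q C) :
    (∀ i j, i ≠ j → A i j = 0 → Q i j ≤ C / (C - Real.sqrt (d i * d j))) ∧
    (∀ i, d i / C -
        ∑ j ∈ univ.filter (fun j => j ≠ i ∧ A i j = 0),
          Real.sqrt (d i * d j) / (C * (C - Real.sqrt (d i * d j))) ≤ P i i) :=
  large_C_bounds_of_KKT_general n A P Q hdiag h01 d hd C hCd hKKT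
end

section
/- (Tightness of the rank bound.) Let n = 2k be even and let G be the perfect matching graph on n vertices (the disjoint union of k edges, so each vertex is adjacent to exactly one other vertex), with adjacency matrix A. Let C ≥ 1 and define the symmetric matrix P* by P*_ii = 1/C for all i, P*_ij = 1/C whenever i∼j, and P*_ij = 0 for all other pairs i ≠ j. Then P* is strictly feasible for (REG), P* is an optimal solution of (REG) with parameter C (i.e., ℒ_{A,C}(P*) ≥ ℒ_{A,C}(M) for every strictly feasible M), and rank(P*) = n/2. -/
/-!
A perfect matching is a fixed-point-free involution `σ`, so `A = P_σ` and `P* = C⁻¹ (1 + P_σ)`.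
Since `P_σ` is symmetric with `P_σ² = 1`, the matrix `(1 + P_σ) / 2` is a symmetric idempotent:
hence `P*` is positive semidefinite, and its rank is the trace of `(1 + P_σ) / 2`, namely `n / 2`.

For optimality, let `M` be strictly feasible. Non-edges contribute `log (1 - Mᵢⱼ) ≤ 0`, and by the
`2 × 2` principal minor `M_{iσi}² ≤ Mᵢᵢ M_{σiσi}`, so `ℒ(M) ≤ ∑ᵢ (log Mᵢᵢ - C Mᵢᵢ)`. Each summand is
at most `log (1/C) - 1`, attained at `Mᵢᵢ = 1/C`, and `P*` attains all these bounds.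
-/

open Finset

open Matrix

theorem Matrix.rank_eq_trace_of_isIdempotentElem {K ι : Type*} [Field K] [Fintype ι]
    [DecidableEq ι] {E : Matrix ι ι K} (hE : IsIdempotentElem E) : (E.rank : K) = E.trace := by
  have hE' : IsIdempotentElem (toLin' E) := hE.map (toLinAlgEquiv' (R := K) (n := ι))
  rw [← trace_toLin'_eq, (LinearMap.IsIdempotentElem.isProj_range _ hE').trace]
  rfl

section PosSemidef

variable {ι : Type*} {M : Matrix ι ι ℝ}

theorem Matrix.PosSemidef.sq_apply_le_mul_diag (hM : M.PosSemidef) (i j : ι) :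
    M i j ^ 2 ≤ M i i * M j j := by
  have h := (hM.submatrix ![i, j]).det_nonneg
  rw [det_fin_two] at h
  have hsym : M j i = M i j := hM.isHermitian.apply i j
  simp only [submatrix_apply, cons_val_zero, cons_val_one, cons_val_fin_one, hsym,
    sub_nonneg] at h
  rwa [sq]

theorem Matrix.PosSemidef.log_apply_le (hM : M.PosSemidef) {i j : ι} (hij : 0 < M i j) :
    Real.log (M i j) ≤ (Real.log (M i i) + Real.log (M j j)) / 2 := by
  have hsq := hM.sq_apply_le_mul_diag i j
  have hprod : M i i * M j j ≠ 0 := ((pow_pos hij 2).trans_le hsq).ne'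
  have hlog := Real.log_le_log (pow_pos hij 2) hsq
  rw [Real.log_pow, Real.log_mul (left_ne_zero_of_mul hprod) (right_ne_zero_of_mul hprod)] at hlog
  push_cast at hlog
  linarith

theorem Matrix.PosSemidef.diag_pos_of_apply_pos (hM : M.PosSemidef) {i j : ι}
    (hij : 0 < M i j) : 0 < M i i :=
  pos_of_mul_pos_left ((pow_pos hij 2).trans_le (hM.sq_apply_le_mul_diag i j)) hM.diag_nonneg

end PosSemidef

theorem Equiv.Perm.trace_permMatrix_of_forall_ne {ι R : Type*} [Fintype ι] [DecidableEq ι]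
    [AddCommMonoidWithOne R] {σ : Equiv.Perm ι} (hfix : ∀ i, σ i ≠ i) :
    (σ.permMatrix R).trace = 0 := by
  simp [trace_permutation, Function.fixedPoints, Function.IsFixedPt, hfix]

namespace Function.Involutive

variable {ι : Type*} [DecidableEq ι] {σ : Equiv.Perm ι}

theorem transpose_permMatrix {R : Type*} [Zero R] [One R] (hσ : Involutive σ) :
    (σ.permMatrix R)ᵀ = σ.permMatrix R := by
  rw [Matrix.transpose_permMatrix, Equiv.Perm.inv_def, symm_eq_self_of_involutive σ hσ]

variable [Fintype ι]

theorem one_add_permMatrix_mul_self {R : Type*} [CommRing R] (hσ : Involutive σ) :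
    (1 + σ.permMatrix R) * (1 + σ.permMatrix R) = (2 : R) • (1 + σ.permMatrix R) := by
  rw [add_mul, mul_add, mul_add, ← permMatrix_mul, show σ * σ = 1 from Equiv.ext hσ,
    permMatrix_one]
  simp only [mul_one, one_mul]
  module

theorem posSemidef_one_add_permMatrix (hσ : Involutive σ) :
    (1 + σ.permMatrix ℝ).PosSemidef := by
  have hgram := (posSemidef_conjTranspose_mul_self (1 + σ.permMatrix ℝ)).smul
    (show (0 : ℝ) ≤ 1 / 2 by norm_num)
  rwa [conjTranspose_eq_transpose_of_trivial, transpose_add, transpose_one,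
    hσ.transpose_permMatrix, hσ.one_add_permMatrix_mul_self, smul_smul,
    one_div_mul_cancel two_ne_zero, one_smul] at hgram

theorem two_mul_rank_one_add_permMatrix {K : Type*} [Field K] [CharZero K] (hσ : Involutive σ)
    (hfix : ∀ i, σ i ≠ i) : 2 * (1 + σ.permMatrix K).rank = Fintype.card ι := by
  have hidem : IsIdempotentElem ((1 / 2 : K) • (1 + σ.permMatrix K)) := by
    rw [IsIdempotentElem, smul_mul_smul_comm, hσ.one_add_permMatrix_mul_self, smul_smul]
    norm_num
  have hrank := rank_eq_trace_of_isIdempotentElem hidem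
  rw [rank_smul_of_mem_nonZeroDivisors _ (mem_nonZeroDivisors_of_ne_zero (by norm_num)),
    trace_smul, trace_add, trace_one,
    Equiv.Perm.trace_permMatrix_of_forall_ne hfix] at hrank
  have hcast : (2 * (1 + σ.permMatrix K).rank : K) = Fintype.card ι := by
    rw [hrank, add_zero, smul_eq_mul]
    ring
  exact_mod_cast hcast

end Function.Involutive

theorem existsUnique_eq_one_of_sum_eq_one {ι R : Type*} [Fintype ι] [AddCommMonoidWithOne R]
    [CharZero R] {f : ι → R} (h01 : ∀ i, f i = 0 ∨ f i = 1) (hsum : ∑ i, f i = 1) :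
    ∃! i, f i = 1 := by
  classical
  have hf : f = fun i => if f i = 1 then 1 else 0 := by
    ext i; rcases h01 i with h | h <;> simp [h]
  rw [hf, sum_boole, Nat.cast_eq_one, card_eq_one_iff_existsUnique] at hsum
  simpa using hsum

theorem Matrix.exists_involutive_eq_permMatrix {ι R : Type*} [Fintype ι] [DecidableEq ι]
    [AddCommMonoidWithOne R] [CharZero R] {A : Matrix ι ι R} (hsym : A.IsSymm)
    (hdiag : ∀ i, A i i = 0) (h01 : ∀ i j, A i j = 0 ∨ A i j = 1) (hmatch : ∀ i, ∑ j, A i j = 1) :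
    ∃ σ : Equiv.Perm ι, Function.Involutive σ ∧ (∀ i, σ i ≠ i) ∧ A = σ.permMatrix R := by
  choose τ hτ hτ_unique using fun i => existsUnique_eq_one_of_sum_eq_one (h01 i) (hmatch i)
  beta_reduce at hτ hτ_unique
  have hτ_inv : Function.Involutive τ := fun i =>
    (hτ_unique (τ i) i (by rw [hsym.apply, hτ])).symm
  refine ⟨hτ_inv.toPerm τ, hτ_inv, fun i (hi : τ i = i) => ?_, ?_⟩
  · simpa [hi, hdiag] using hτ i
  · ext i j
    rcases h01 i j with h | h
    · have : τ i ≠ j := by rintro rfl; simp [hτ i] at h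
      simp [h, this]
    · obtain rfl := hτ_unique i j h
      simp [h]

theorem Real.log_sub_mul_le {C x : ℝ} (hC : 0 < C) (hx : 0 < x) :
    Real.log x - C * x ≤ Real.log (1 / C) - 1 := by
  have h := Real.log_le_sub_one_of_pos (mul_pos hC hx)
  rw [Real.log_mul hC.ne' hx.ne'] at h
  rw [one_div, Real.log_inv]
  linarith

section PerfectMatching

variable {n : ℕ} {σ : Equiv.Perm (Fin n)}

theorem bernLL_permMatrix_le_sum_log_diag (hfix : ∀ i, σ i ≠ i)
    {M : Matrix (Fin n) (Fin n) ℝ} (hM : StrictFeasible (σ.permMatrix ℝ) M) :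
    bernLL (σ.permMatrix ℝ) M ≤ ∑ i, Real.log (M i i) := by
  obtain ⟨hpsd, hbox, hpos, -⟩ := hM
  have hpos' : ∀ i, 0 < M i (σ i) := fun i => hpos i (σ i) (by simp)
  calc bernLL (σ.permMatrix ℝ) M
      ≤ ∑ i, ∑ j, if σ i = j then Real.log (M i (σ i)) else 0 := by
        refine sum_le_sum fun i _ => sum_le_sum fun j _ => ?_
        by_cases hij : i = j
        · subst hij; simp [hfix i]
        by_cases hσij : σ i = j
        · subst hσij; simp [hij]
        · have := hbox i j hij
          simpa [hij, hσij] using Real.log_nonpos (by linarith) (by linarith)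
    _ = ∑ i, Real.log (M i (σ i)) := by simp
    _ ≤ ∑ i, (Real.log (M i i) + Real.log (M (σ i) (σ i))) / 2 :=
      sum_le_sum fun i _ => hpsd.log_apply_le (hpos' i)
    _ = ∑ i, Real.log (M i i) := by
      rw [← sum_div, sum_add_distrib, Equiv.sum_comp σ (fun i => Real.log (M i i))]
      ring

theorem regLL_permMatrix_le (hfix : ∀ i, σ i ≠ i) {C : ℝ}
    (hC : 0 < C) {M : Matrix (Fin n) (Fin n) ℝ} (hM : StrictFeasible (σ.permMatrix ℝ) M) :
    regLL (σ.permMatrix ℝ) C M ≤ n * (Real.log (1 / C) - 1) := by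
  have hdiag : ∀ i, 0 < M i i := fun i => hM.1.diag_pos_of_apply_pos (hM.2.2.1 i (σ i) (by simp))
  calc regLL (σ.permMatrix ℝ) C M ≤ ∑ i, (Real.log (M i i) - C * M i i) := by
        rw [regLL, trace, sum_sub_distrib, ← mul_sum]
        exact sub_le_sub_right (bernLL_permMatrix_le_sum_log_diag hfix hM) _
    _ ≤ ∑ _i : Fin n, (Real.log (1 / C) - 1) :=
      sum_le_sum fun i _ => Real.log_sub_mul_le hC (hdiag i)
    _ = n * (Real.log (1 / C) - 1) := by
      rw [sum_const, card_univ, Fintype.card_fin, nsmul_eq_mul]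

theorem strictFeasible_smul_one_add_permMatrix (hσ : Function.Involutive σ)
    (hfix : ∀ i, σ i ≠ i) {c : ℝ} (hc0 : 0 < c) (hc1 : c ≤ 1) :
    StrictFeasible (σ.permMatrix ℝ) (c • (1 + σ.permMatrix ℝ)) := by
  refine ⟨hσ.posSemidef_one_add_permMatrix.smul hc0.le, fun i j hij => ?_, fun i j h => ?_,
    fun i j hij h => ?_⟩
  · by_cases hσij : σ i = j <;> simp [one_apply, hij, hσij, hc0.le, hc1]
  · have hσij : σ i = j := by simpa using h
    subst hσij
    simp [one_apply, Ne.symm (hfix i), hc0]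
  · have hσij : σ i ≠ j := by simpa using h
    simp [one_apply, hij, hσij]

theorem bernLL_smul_one_add_permMatrix (hfix : ∀ i, σ i ≠ i) (c : ℝ) :
    bernLL (σ.permMatrix ℝ) (c • (1 + σ.permMatrix ℝ)) = n * Real.log c := by
  calc bernLL (σ.permMatrix ℝ) (c • (1 + σ.permMatrix ℝ))
      = ∑ i : Fin n, ∑ j, if σ i = j then Real.log c else 0 := by
        refine sum_congr rfl fun i _ => sum_congr rfl fun j _ => ?_
        by_cases hij : i = j
        · subst hij; simp [hfix i]
        by_cases hσij : σ i = j
        · subst hσij; simp [one_apply, hij]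
        · simp [one_apply, hij, hσij]
    _ = n * Real.log c := by simp

theorem regLL_smul_one_add_permMatrix (hfix : ∀ i, σ i ≠ i) {C : ℝ} (hC : 0 < C) :
    regLL (σ.permMatrix ℝ) C ((1 / C) • (1 + σ.permMatrix ℝ)) = n * (Real.log (1 / C) - 1) := by
  rw [regLL, bernLL_smul_one_add_permMatrix hfix, trace_smul, trace_add, trace_one,
    Equiv.Perm.trace_permMatrix_of_forall_ne hfix, add_zero, Fintype.card_fin, smul_eq_mul]
  field_simp

end PerfectMatching

/-- Tightness of the rank bound: for the perfect matching graph on `n = 2k` vertices, the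
matrix with `1/C` on the diagonal and on matched pairs, and `0` elsewhere, is an optimal
solution of (REG) of rank exactly `n/2 = k`. -/
theorem perfect_matching_rank_tight (n k : ℕ) (hn : n = 2 * k)
    (A : Matrix (Fin n) (Fin n) ℝ)
    (hsym : A.IsSymm) (hdiag : ∀ i, A i i = 0)
    (h01 : ∀ i j, A i j = 0 ∨ A i j = 1)
    (hmatch : ∀ i, ∑ j, A i j = 1)
    (C : ℝ) (hC : 1 ≤ C)
    (Pstar : Matrix (Fin n) (Fin n) ℝ)
    (hPstar : ∀ i j, Pstar i j =
      if i = j then 1 / C else if A i j = 1 then 1 / C else 0) :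
    StrictFeasible A Pstar ∧
    (∀ M, StrictFeasible A M → regLL A C M ≤ regLL A C Pstar) ∧
    Pstar.rank = k := by
  obtain ⟨σ, hσ, hfix, rfl⟩ := exists_involutive_eq_permMatrix hsym hdiag h01 hmatch
  have hC0 : 0 < C := one_pos.trans_le hC
  obtain rfl : Pstar = (1 / C) • (1 + σ.permMatrix ℝ) := by
    ext i j
    rw [hPstar]
    by_cases hij : i = j
    · subst hij; simp [hfix i]
    · by_cases hσij : σ i = j <;> simp [one_apply, hij, hσij]
  refine ⟨strictFeasible_smul_one_add_permMatrix hσ hfix (by positivity)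
      ((div_le_one hC0).mpr hC), fun M hM => ?_, ?_⟩
  · rw [regLL_smul_one_add_permMatrix hfix hC0]
    exact regLL_permMatrix_le hfix hC0 hM
  · have := hσ.two_mul_rank_one_add_permMatrix (K := ℝ) hfix
    rw [rank_smul_of_mem_nonZeroDivisors _ (mem_nonZeroDivisors_of_ne_zero (by positivity))]
    rw [Fintype.card_fin] at this
    omega
end

section
/- Let G be a simple graph on n vertices with adjacency matrix A, degree matrix D, and m edges, and let C ≥ 1. Then the matrix (1/C)(D + A) is strictly feasible for (REG) and ℒ_{A,C}((1/C)(D + A)) = −2m·log C − 2m. Consequently, every optimal solution P* of (REG) with parameter C satisfies ℒ_{A,C}(P*) ≥ −2m(log C + 1), and also L_A(P*) := Σ_{i≠j}[A_ij·log P*_ij + (1−A_ij)·log(1−P*_ij)] ≥ −2m(log C + 1). -/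
open Finset

def IsOptimalREG {n : ℕ} (A : Matrix (Fin n) (Fin n) ℝ) (C : ℝ)
    (P : Matrix (Fin n) (Fin n) ℝ) : Prop :=
  StrictFeasible A P ∧ ∀ M, StrictFeasible A M → regLL A C M ≤ regLL A C P

/-!
The signless Laplacian `D + A` has quadratic form `xᵀ(D + A)x = ½ ∑ᵢⱼ Aᵢⱼ (xᵢ + xⱼ)²`, so it is
positive semidefinite. The off-diagonal entries of `(1/C)(D + A)` are `Aᵢⱼ / C ∈ {0, 1/C}`: each of
the `2m` ordered edges contributes `log (1/C)` to `L_A`, each non-edge `log 1 = 0`, and the trace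
is `2m / C`. Optimality of `P*` then gives the bound on `ℒ_{A,C}(P*)`, and `tr P* ≥ 0` transfers
it to `L_A(P*) = ℒ_{A,C}(P*) + C tr P*`.
-/

namespace Matrix

variable {ι R : Type*} [DecidableEq ι]

theorem smul_add_diagonal_apply_of_ne [Semiring R] (c : R) (d : ι → R) (A : Matrix ι ι R)
    {i j : ι} (hij : i ≠ j) : (c • (diagonal d + A)) i j = c * A i j := by
  simp [diagonal_apply_ne _ hij]

variable [Fintype ι]

theorem two_mul_dotProduct_diagonal_rowSum_add_mulVec [CommRing R] {A : Matrix ι ι R}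
    (hA : A.IsSymm) (x : ι → R) :
    2 * (x ⬝ᵥ ((diagonal (fun i => ∑ j, A i j) + A) *ᵥ x)) =
      ∑ i, ∑ j, A i j * (x i + x j) ^ 2 := by
  have hsq : ∑ i, ∑ j, A i j * x j ^ 2 = ∑ i, ∑ j, A i j * x i ^ 2 := by
    rw [sum_comm]
    exact sum_congr rfl fun i _ => sum_congr rfl fun j _ => by rw [hA.apply j i]
  rw [add_mulVec, dotProduct_add]
  simp only [dotProduct, mulVec_diagonal]
  simp only [mulVec, dotProduct, sum_mul, mul_sum, add_sq, mul_add,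
    sum_add_distrib, hsq]
  simp only [← sum_add_distrib]
  exact sum_congr rfl fun i _ => sum_congr rfl fun j _ => by ring

theorem posSemidef_diagonal_rowSum_add {A : Matrix ι ι ℝ} (hA : A.IsSymm)
    (hA₀ : ∀ i j, 0 ≤ A i j) : (diagonal (fun i => ∑ j, A i j) + A).PosSemidef := by
  refine .of_dotProduct_mulVec_nonneg ((isHermitian_diagonal _).add
    (isHermitian_iff_isSymm.mpr hA)) fun x => ?_
  have h := two_mul_dotProduct_diagonal_rowSum_add_mulVec hA x
  have : 0 ≤ ∑ i, ∑ j, A i j * (x i + x j) ^ 2 :=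
    sum_nonneg fun i _ => sum_nonneg fun j _ => mul_nonneg (hA₀ i j) (sq_nonneg _)
  rw [star_trivial]
  linarith

theorem trace_diagonal_rowSum_add [AddCommMonoid R] {A : Matrix ι ι R} (hA : ∀ i, A i i = 0) :
    (diagonal (fun i => ∑ j, A i j) + A).trace = ∑ i, ∑ j, A i j := by
  simp [trace, hA]

end Matrix

open Matrix

section REG

variable {n : ℕ} {A : Matrix (Fin n) (Fin n) ℝ} {C : ℝ}

theorem bernLL_eq_neg_sum_mul_log {M : Matrix (Fin n) (Fin n) ℝ} (hdiag : ∀ i, A i i = 0)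
    (h01 : ∀ i j, A i j = 0 ∨ A i j = 1) (hM : ∀ i j, i ≠ j → M i j = C⁻¹ * A i j) :
    bernLL A M = -(∑ i, ∑ j, A i j) * Real.log C := by
  have hterm : ∀ i j, (if i ≠ j then A i j * Real.log (M i j) +
      (1 - A i j) * Real.log (1 - M i j) else 0) = A i j * -Real.log C := by
    intro i j
    by_cases hij : i = j
    · simp [hij, hdiag]
    · rw [if_pos hij, hM i j hij]
      rcases h01 i j with h | h <;> simp [h, Real.log_inv]
  simp only [bernLL, hterm, ← sum_mul]
  ring

theorem regLL_le_bernLL {P : Matrix (Fin n) (Fin n) ℝ} (hP : P.PosSemidef) (hC : 0 ≤ C) :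
    regLL A C P ≤ bernLL A P :=
  sub_le_self _ (mul_nonneg hC hP.trace_nonneg)

theorem strictFeasible_smul_diagonal_rowSum_add (hsym : A.IsSymm) (hdiag : ∀ i, A i i = 0)
    (h01 : ∀ i j, A i j = 0 ∨ A i j = 1) (hC : 1 ≤ C) :
    StrictFeasible A ((1 / C) • (diagonal (fun i => ∑ j, A i j) + A)) := by
  have hC₀ : 0 < C := one_pos.trans_le hC
  have hA₀ : ∀ i j, 0 ≤ A i j := fun i j => by rcases h01 i j with h | h <;> simp [h]
  refine ⟨(posSemidef_diagonal_rowSum_add hsym hA₀).smul (by positivity), ?_, ?_, ?_⟩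
  · intro i j hij
    rw [smul_add_diagonal_apply_of_ne _ _ _ hij, one_div]
    rcases h01 i j with h | h <;> simp [h, hC₀.le, inv_le_one_of_one_le₀ hC]
  · intro i j h
    have hij : i ≠ j := by rintro rfl; simp [hdiag] at h
    rw [smul_add_diagonal_apply_of_ne _ _ _ hij, h]
    positivity
  · intro i j hij h
    simp [smul_add_diagonal_apply_of_ne _ _ _ hij, h]

theorem regLL_smul_diagonal_rowSum_add (hdiag : ∀ i, A i i = 0)
    (h01 : ∀ i j, A i j = 0 ∨ A i j = 1) (hC : C ≠ 0) :
    regLL A C ((1 / C) • (diagonal (fun i => ∑ j, A i j) + A)) =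
      -(∑ i, ∑ j, A i j) * Real.log C - ∑ i, ∑ j, A i j := by
  rw [regLL, bernLL_eq_neg_sum_mul_log hdiag h01 fun i j hij => by
      rw [smul_add_diagonal_apply_of_ne _ _ _ hij, one_div],
    trace_smul, trace_diagonal_rowSum_add hdiag, smul_eq_mul]
  field_simp

end REG

/-- The scaled signless Laplacian `(1/C)(D + A)` is strictly feasible for (REG), achieves
objective value `-2m log C - 2m`, and hence every optimal solution `P*` of (REG) satisfies
`ℒ_{A,C}(P*) ≥ -2m(log C + 1)` and `L_A(P*) ≥ -2m(log C + 1)`. -/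
theorem scaled_signless_laplacian_lower_bound (n m : ℕ)
    (A : Matrix (Fin n) (Fin n) ℝ)
    (hsym : A.IsSymm) (hdiag : ∀ i, A i i = 0)
    (h01 : ∀ i j, A i j = 0 ∨ A i j = 1)
    (hm : ∑ i, ∑ j, A i j = 2 * m)
    (C : ℝ) (hC : 1 ≤ C) :
    StrictFeasible A ((1 / C) • (Matrix.diagonal (fun i => ∑ j, A i j) + A)) ∧
    regLL A C ((1 / C) • (Matrix.diagonal (fun i => ∑ j, A i j) + A)) =
      -(2 * m) * Real.log C - 2 * m ∧
    (∀ Pstar, IsOptimalREG A C Pstar →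
      -(2 * m) * (Real.log C + 1) ≤ regLL A C Pstar ∧
      -(2 * m) * (Real.log C + 1) ≤ bernLL A Pstar) := by
  have hfeas := strictFeasible_smul_diagonal_rowSum_add hsym hdiag h01 hC
  have hval : regLL A C ((1 / C) • (diagonal (fun i => ∑ j, A i j) + A)) =
      -(2 * m) * Real.log C - 2 * m := by
    rw [regLL_smul_diagonal_rowSum_add hdiag h01 (by positivity), hm]
  refine ⟨hfeas, hval, fun P hP => ?_⟩
  have hreg : -(2 * m) * (Real.log C + 1) ≤ regLL A C P := by
    linarith [hP.2 _ hfeas]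
  exact ⟨hreg, hreg.trans (regLL_le_bernLL hP.1.1 (by positivity))⟩
end

section
/- (Dual-feasible upper bound on the optimal value.) Let G be a simple graph on n vertices with adjacency matrix A, degrees d_i, maximum degree Δ := max_i d_i, and m edges, and let C ≥ max(Δ, 1). Then every optimal solution P* of (REG) with parameter C satisfies ℒ_{A,C}(P*) ≤ −2m − 2m·log C + Σ_{(i,j): i∼j} log max(d_i, d_j), where the sum is over ordered pairs (i,j) with i∼j. -/
/-!
Weak duality. On an edge, `log x ≤ t x - 1 - log t` (the Fenchel conjugate of `-log`) with
`t = C / max(d_i, d_j)`; off the edges the terms `log (1 - P_ij)` are `≤ 0`. Because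
`2 P_ij ≤ P_ii + P_jj` for positive semidefinite `P`, and each row of the weights
`A_ij / max(d_i, d_j)` sums to at most `1`, the linear terms add up to at most `C · tr P`,
which the regularizer cancels.
-/

open Finset

theorem Matrix.PosSemidef.two_mul_apply_le_add {ι : Type*} {P : Matrix ι ι ℝ}
    (hP : P.PosSemidef) (i j : ι) : 2 * P i j ≤ P i i + P j j := by
  classical
  have h := hP.2 (Finsupp.single i 1 - Finsupp.single j 1)
  have hji : P j i = P i j := by simpa using hP.isHermitian.apply i j
  simp [Finsupp.sum_sub_index, sub_mul, mul_sub, hji] at h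
  linarith

theorem Matrix.PosSemidef.sum_mul_le_trace {ι : Type*} [Fintype ι] {P W : Matrix ι ι ℝ}
    (hP : P.PosSemidef) (hW : W.IsSymm) (hW0 : ∀ i j, 0 ≤ W i j)
    (hrow : ∀ i, ∑ j, W i j ≤ 1) : ∑ i, ∑ j, W i j * P i j ≤ P.trace := by
  have hswap : ∑ i, ∑ j, W i j * P j j = ∑ i, ∑ j, W i j * P i i := by
    rw [sum_comm]
    simp only [hW.apply]
  calc ∑ i, ∑ j, W i j * P i j
      ≤ ∑ i, ∑ j, W i j * ((P i i + P j j) / 2) := by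
        gcongr with i _ j _
        · exact hW0 i j
        · linarith [hP.two_mul_apply_le_add i j]
    _ = ∑ i, ∑ j, W i j * P i i := by
        simp only [mul_add, mul_div_assoc', sum_add_distrib, ← sum_div, add_div, hswap]
        ring
    _ = ∑ i, P i i * ∑ j, W i j := by simp only [mul_sum, mul_comm]
    _ ≤ ∑ i, P i i := by
        gcongr with i _
        exact mul_le_of_le_one_right hP.diag_nonneg (hrow i)

theorem Real.log_le_mul_sub_one_sub_log {x t : ℝ} (hx : 0 < x) (ht : 0 < t) :
    Real.log x ≤ t * x - 1 - Real.log t := by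
  have := Real.log_le_sub_one_of_pos (mul_pos ht hx)
  rw [Real.log_mul ht.ne' hx.ne'] at this
  linarith

theorem Finset.sum_div_le_one_of_sum_le {ι : Type*} [Fintype ι] {a D : ι → ℝ}
    (ha : ∀ j, 0 ≤ a j) (hD : ∀ j, ∑ k, a k ≤ D j) : ∑ j, a j / D j ≤ 1 := by
  rcases (sum_nonneg fun j _ => ha j).eq_or_lt with hs | hs
  · have ha0 : ∀ j, a j = 0 := fun j =>
      (sum_eq_zero_iff_of_nonneg fun k _ => ha k).1 hs.symm j (mem_univ j)
    simp [ha0]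
  calc ∑ j, a j / D j ≤ ∑ j, a j / ∑ k, a k := by
        gcongr with j _
        exacts [ha j, hD j]
    _ = 1 := by rw [← sum_div, div_self hs.ne']

theorem bernLL_le_sum_mul_log {n : ℕ} {A M : Matrix (Fin n) (Fin n) ℝ}
    (hA : ∀ i j, A i j ≤ 1) (hdiag : ∀ i, A i i = 0)
    (hM : ∀ i j, i ≠ j → 0 ≤ M i j ∧ M i j ≤ 1) :
    bernLL A M ≤ ∑ i, ∑ j, A i j * Real.log (M i j) := by
  unfold bernLL
  gcongr with i _ j _
  split_ifs with hij
  · obtain ⟨hM0, hM1⟩ := hM i j hij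
    have hlog : Real.log (1 - M i j) ≤ 0 := Real.log_nonpos (by linarith) (by linarith)
    have := mul_nonpos_of_nonneg_of_nonpos (sub_nonneg.2 (hA i j)) hlog
    linarith
  · simp [not_not.1 hij, hdiag]

theorem sum_mul_log_le {ι : Type*} [Fintype ι] {A P D : Matrix ι ι ℝ} {C : ℝ} (hC : 0 < C)
    (hA : ∀ i j, 0 ≤ A i j) (hP : ∀ i j, A i j ≠ 0 → 0 < P i j)
    (hD : ∀ i j, A i j ≠ 0 → 0 < D i j) :
    ∑ i, ∑ j, A i j * Real.log (P i j) ≤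
      C * ∑ i, ∑ j, A i j / D i j * P i j - (1 + Real.log C) * ∑ i, ∑ j, A i j
        + ∑ i, ∑ j, A i j * Real.log (D i j) := by
  have key : ∀ i j, A i j * Real.log (P i j) ≤
      A i j * (C / D i j * P i j - 1 - Real.log C + Real.log (D i j)) := by
    intro i j
    rcases eq_or_ne (A i j) 0 with h | h
    · simp [h]
    have hD := hD i j h
    have := Real.log_le_mul_sub_one_sub_log (hP i j h) (div_pos hC hD)
    rw [Real.log_div hC.ne' hD.ne'] at this
    exact mul_le_mul_of_nonneg_left (by linarith) (hA i j)
  calc _ ≤ ∑ i, ∑ j, A i j * (C / D i j * P i j - 1 - Real.log C + Real.log (D i j)) :=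
        sum_le_sum fun i _ => sum_le_sum fun j _ => key i j
    _ = _ := by
        simp only [mul_sum, ← sum_sub_distrib, ← sum_add_distrib]
        refine sum_congr rfl fun i _ => sum_congr rfl fun j _ => ?_
        ring

theorem dual_feasible_upper_bound_general (n m : ℕ)
    (A : Matrix (Fin n) (Fin n) ℝ)
    (hsym : A.IsSymm) (hdiag : ∀ i, A i i = 0)
    (h01 : ∀ i j, A i j = 0 ∨ A i j = 1)
    (d : Fin n → ℝ) (hd : ∀ i, d i = ∑ j, A i j)
    (hm : ∑ i, ∑ j, A i j = 2 * m)
    (C : ℝ) (hC1 : 1 ≤ C)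
    (Pstar : Matrix (Fin n) (Fin n) ℝ) (hopt : IsOptimalREG A C Pstar) :
    regLL A C Pstar ≤
      -(2 * m) - 2 * m * Real.log C +
        ∑ i, ∑ j, (if A i j = 1 then Real.log (max (d i) (d j)) else 0) := by
  obtain ⟨⟨hPsd, hbox, hpos, -⟩, -⟩ := hopt
  have hC : 0 < C := by linarith
  have hA0 : ∀ i j, 0 ≤ A i j := fun i j => by rcases h01 i j with h | h <;> simp [h]
  have hA1 : ∀ i j, A i j ≤ 1 := fun i j => by rcases h01 i j with h | h <;> simp [h]
  have hd0 : ∀ i, 0 ≤ d i := fun i => hd i ▸ sum_nonneg fun k _ => hA0 i k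
  let D : Matrix (Fin n) (Fin n) ℝ := fun i j => max (d i) (d j)
  have hDpos : ∀ i j, A i j ≠ 0 → 0 < D i j := fun i j h =>
    calc 0 < A i j := (hA0 i j).lt_of_ne' h
      _ ≤ d i := hd i ▸ single_le_sum (fun k _ => hA0 i k) (mem_univ j)
      _ ≤ D i j := le_max_left _ _
  have htrace : ∑ i, ∑ j, A i j / D i j * Pstar i j ≤ Pstar.trace :=
    hPsd.sum_mul_le_trace (W := fun i j => A i j / D i j)
      (Matrix.IsSymm.ext fun i j => by simp [D, hsym.apply, max_comm])
      (fun i j => div_nonneg (hA0 i j) ((hd0 i).trans (le_max_left _ _)))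
      (fun i => sum_div_le_one_of_sum_le (hA0 i) fun j => hd i ▸ le_max_left _ _)
  have hlog := sum_mul_log_le hC hA0 (fun i j h => hpos i j ((h01 i j).resolve_left h)) hDpos
  have hbern := bernLL_le_sum_mul_log hA1 hdiag hbox
  have hedges : ∑ i, ∑ j, (if A i j = 1 then Real.log (max (d i) (d j)) else 0)
      = ∑ i, ∑ j, A i j * Real.log (D i j) := by
    refine sum_congr rfl fun i _ => sum_congr rfl fun j _ => ?_
    rcases h01 i j with h | h <;> simp [h, D]
  have hreg := mul_le_mul_of_nonneg_left htrace hC.le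
  rw [hm] at hlog
  rw [regLL, hedges]
  linarith

/-- Dual-feasible upper bound on the optimal value of (REG) when `C ≥ max(Δ, 1)`. -/
theorem dual_feasible_upper_bound (n m : ℕ)
    (A : Matrix (Fin n) (Fin n) ℝ)
    (hsym : A.IsSymm) (hdiag : ∀ i, A i i = 0)
    (h01 : ∀ i j, A i j = 0 ∨ A i j = 1)
    (d : Fin n → ℝ) (hd : ∀ i, d i = ∑ j, A i j)
    (hm : ∑ i, ∑ j, A i j = 2 * m)
    (C : ℝ) (hC1 : 1 ≤ C) (hCd : ∀ i, d i ≤ C)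
    (Pstar : Matrix (Fin n) (Fin n) ℝ) (hopt : IsOptimalREG A C Pstar) :
    regLL A C Pstar ≤
      -(2 * m) - 2 * m * Real.log C +
        ∑ i, ∑ j, (if A i j = 1 then Real.log (max (d i) (d j)) else 0) :=
  dual_feasible_upper_bound_general n m A hsym hdiag h01 d hd hm C hC1 Pstar hopt
end

section
/- (Exact recovery in the weak-regularization regime.) Let G be a simple graph on n vertices with adjacency matrix A and let 0 < C ≤ 1. Then every optimal solution P* of (REG) with parameter C satisfies P*_ij = A_ij for all i ≠ j. -/
open Finset

open Matrix

/-!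
If `P*_ij ≠ A_ij` for some `i ≠ j`, put `d = A_ij - P*_ij` and add the rank-one positive
semidefinite matrix `|d| v vᵀ`, `v = e_i + sign(d) e_j`. This moves the pair of entries
`(i, j), (j, i)` exactly onto `A_ij ∈ {0, 1}`, changes no other off-diagonal entry, does not
decrease the diagonal, so the result is strictly feasible, and raises the trace by `2|d|`.
Each of the two moved entries gains more than `|d|` in log-likelihood, since `log x < x - 1`
on `(0, 1)`; as `C ≤ 1`, the objective strictly increases, contradicting optimality.
-/

noncomputable def bernTerm (a x : ℝ) : ℝ :=
  a * Real.log x + (1 - a) * Real.log (1 - x)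

theorem bernTerm_self {a : ℝ} (ha : a = 0 ∨ a = 1) : bernTerm a a = 0 := by
  rcases ha with rfl | rfl <;> simp [bernTerm]

theorem bernTerm_lt_neg_abs_sub {a x : ℝ} (ha : a = 0 ∨ a = 1) (hx : x ∈ Set.Ioo 0 1) :
    bernTerm a x < -|a - x| := by
  obtain ⟨hx0, hx1⟩ := hx
  rcases ha with rfl | rfl
  · have := Real.log_lt_sub_one_of_pos (sub_pos.2 hx1) (by linarith)
    simp only [bernTerm, zero_mul, sub_zero, one_mul, zero_add, zero_sub, abs_neg, abs_of_pos hx0]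
    linarith
  · have := Real.log_lt_sub_one_of_pos hx0 hx1.ne
    simp only [bernTerm, one_mul, sub_self, zero_mul, add_zero, abs_of_pos (sub_pos.2 hx1)]
    linarith

theorem exists_posSemidef_pair_update {ι : Type*} [Fintype ι] [DecidableEq ι]
    {P : Matrix ι ι ℝ} (hP : P.PosSemidef) {i j : ι} (hij : i ≠ j) (s : ℝ) :
    ∃ M : Matrix ι ι ℝ, M.PosSemidef ∧ (∀ a, P a a ≤ M a a) ∧
      (∀ a b, a ≠ b → s(a, b) ≠ s(i, j) → M a b = P a b) ∧ M i j = s ∧ M j i = s ∧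
      M.trace = P.trace + 2 * |s - P i j| := by
  set d := s - P i j
  set v : ι → ℝ := Pi.single i 1 + Pi.single j (SignType.sign d : ℝ)
  have hPji : P j i = P i j := by simpa using congrFun (congrFun hP.1 i) j
  have hM : ∀ a b, (P + |d| • vecMulVec v v) a b = P a b + |d| * (v a * v b) := fun a b => by
    simp [vecMulVec_apply]
  refine ⟨P + |d| • vecMulVec v v,
    hP.add ((posSemidef_vecMulVec_self_star v).smul (abs_nonneg d)), fun a => ?_,
    fun a b hab hne => ?_, ?_, ?_, ?_⟩
  · rw [hM]
    nlinarith [abs_nonneg d, mul_self_nonneg (v a)]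
  · have : v a * v b = 0 := by
      simp only [v, Pi.add_apply, Pi.single_apply]
      split_ifs <;> simp_all
    rw [hM, this, mul_zero, add_zero]
  · simp [hM, v, hij, hij.symm, d]
  · simp [hM, v, hij, hij.symm, d, hPji]
  · simp only [v, trace_add, trace_smul, trace_vecMulVec, dotProduct_add, dotProduct_single,
      Pi.add_apply, Pi.single_eq_same, Pi.single_eq_of_ne hij, Pi.single_eq_of_ne hij.symm,
      add_zero, zero_add, mul_one, smul_eq_mul, add_right_inj]
    rw [mul_add, mul_one, ← mul_assoc, abs_mul_sign, self_mul_sign, two_mul]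

section

variable {n : ℕ} {A P M : Matrix (Fin n) (Fin n) ℝ}

theorem StrictFeasible.mem_Ioo_of_ne (hP : StrictFeasible A P) {i j : Fin n} (hij : i ≠ j)
    (hA : A i j = 0 ∨ A i j = 1) (hne : P i j ≠ A i j) : P i j ∈ Set.Ioo 0 1 := by
  obtain ⟨-, hbox, hpos, hlt⟩ := hP
  rcases hA with hA | hA
  · exact ⟨(hbox i j hij).1.lt_of_ne (hA ▸ hne).symm, hlt i j hij hA⟩
  · exact ⟨hpos i j hA, (hbox i j hij).2.lt_of_ne (hA ▸ hne)⟩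

theorem StrictFeasible.of_offDiag_eq_or_eq (hP : StrictFeasible A P) (hM : M.PosSemidef)
    (h01 : ∀ a b, A a b = 0 ∨ A a b = 1) (hdiag : ∀ a, P a a ≤ M a a)
    (hoff : ∀ a b, a ≠ b → M a b = P a b ∨ M a b = A a b) : StrictFeasible A M := by
  obtain ⟨-, hbox, hpos, hlt⟩ := hP
  refine ⟨hM, fun a b hab => ?_, fun a b hab => ?_, fun a b hab hA => ?_⟩
  · rcases hoff a b hab with h | h <;> rw [h]
    · exact hbox a b hab
    · rcases h01 a b with h' | h' <;> simp [h']
  · obtain rfl | hne := eq_or_ne a b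
    · exact (hpos a a hab).trans_le (hdiag a)
    · rcases hoff a b hne with h | h <;> rw [h]
      · exact hpos a b hab
      · simp [hab]
  · rcases hoff a b hab with h | h <;> rw [h]
    · exact hlt a b hab hA
    · simp [hA]

theorem bernLL_sub_bernLL_of_eq_off_pair {i j : Fin n} (hij : i ≠ j)
    (hoff : ∀ a b, a ≠ b → s(a, b) ≠ s(i, j) → M a b = P a b) :
    bernLL A M - bernLL A P =
      (bernTerm (A i j) (M i j) - bernTerm (A i j) (P i j)) +
        (bernTerm (A j i) (M j i) - bernTerm (A j i) (P j i)) := by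
  simp only [bernLL, ← Fintype.sum_prod_type', ← Finset.sum_sub_distrib]
  rw [Fintype.sum_eq_add (i, j) (j, i) (by simp [hij])]
  · simp [hij, hij.symm, bernTerm]
  · rintro ⟨a, b⟩ ⟨hij', hji'⟩
    obtain rfl | hab := eq_or_ne a b
    · simp
    · have : s(a, b) ≠ s(i, j) := by
        rw [Ne, Sym2.eq_iff]; rintro (⟨rfl, rfl⟩ | ⟨rfl, rfl⟩) <;> simp_all
      simp [hab, hoff a b hab this]

theorem regLL_lt_of_pair_update {C : ℝ} (hC : C ≤ 1) {i j : Fin n} (hij : i ≠ j)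
    (hAij : A i j = 0 ∨ A i j = 1) (hAji : A j i = 0 ∨ A j i = 1)
    (hPij : P i j ∈ Set.Ioo 0 1) (hPji : P j i ∈ Set.Ioo 0 1)
    (hoff : ∀ a b, a ≠ b → s(a, b) ≠ s(i, j) → M a b = P a b)
    (hMij : M i j = A i j) (hMji : M j i = A j i)
    (htr : M.trace = P.trace + |A i j - P i j| + |A j i - P j i|) :
    regLL A C P < regLL A C M := by
  have hgain := bernLL_sub_bernLL_of_eq_off_pair (A := A) hij hoff
  rw [hMij, hMji, bernTerm_self hAij, bernTerm_self hAji] at hgain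
  have hPij_loss := bernTerm_lt_neg_abs_sub hAij hPij
  have hPji_loss := bernTerm_lt_neg_abs_sub hAji hPji
  have htr_cost : C * (|A i j - P i j| + |A j i - P j i|) ≤ |A i j - P i j| + |A j i - P j i| :=
    mul_le_of_le_one_left (by positivity) hC
  simp only [regLL, htr]
  linarith

end

theorem exact_recovery_small_C_general (n : ℕ)
    (A : Matrix (Fin n) (Fin n) ℝ)
    (hsym : A.IsSymm)
    (h01 : ∀ i j, A i j = 0 ∨ A i j = 1)
    (C : ℝ) (hC1 : C ≤ 1)
    (Pstar : Matrix (Fin n) (Fin n) ℝ) (hopt : IsOptimalREG A C Pstar) :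
    ∀ i j, i ≠ j → Pstar i j = A i j := by
  intro i j hij
  by_contra hne
  obtain ⟨hP, hmax⟩ := hopt
  have hAji : A j i = A i j := by simpa using congrFun (congrFun hsym i) j
  have hPji : Pstar j i = Pstar i j := by simpa using congrFun (congrFun hP.1.1 i) j
  obtain ⟨M, hM, hdiag, hoff, hMij, hMji, htr⟩ := exists_posSemidef_pair_update hP.1 hij (A i j)
  have hfeas : StrictFeasible A M := by
    refine hP.of_offDiag_eq_or_eq hM h01 hdiag fun a b hab => ?_
    by_cases hpair : s(a, b) = s(i, j)
    · rcases Sym2.eq_iff.1 hpair with ⟨rfl, rfl⟩ | ⟨rfl, rfl⟩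
      · exact .inr hMij
      · exact .inr (hMji.trans hAji.symm)
    · exact .inl (hoff a b hab hpair)
  refine (hmax M hfeas).not_gt (regLL_lt_of_pair_update hC1 hij (h01 i j) (h01 j i)
    (hP.mem_Ioo_of_ne hij (h01 i j) hne) (hP.mem_Ioo_of_ne hij.symm (h01 j i) ?_)
    hoff hMij (hMji.trans hAji.symm) ?_)
  · rwa [hPji, hAji]
  · rw [htr, hPji, hAji, add_assoc, two_mul]

/-- Exact recovery in the weak-regularization regime `0 < C ≤ 1`: every optimal solution
of (REG) agrees with the adjacency matrix off the diagonal. -/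
theorem exact_recovery_small_C (n : ℕ)
    (A : Matrix (Fin n) (Fin n) ℝ)
    (hsym : A.IsSymm) (hdiag : ∀ i, A i i = 0)
    (h01 : ∀ i j, A i j = 0 ∨ A i j = 1)
    (C : ℝ) (hC0 : 0 < C) (hC1 : C ≤ 1)
    (Pstar : Matrix (Fin n) (Fin n) ℝ) (hopt : IsOptimalREG A C Pstar) :
    ∀ i j, i ≠ j → Pstar i j = A i j :=
  exact_recovery_small_C_general n A hsym h01 C hC1 Pstar hopt
end
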